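/- arXiv:1011.2877 — 2 statements merged into one kernel-verified Lean document; each statement's English description precedes it below -/
import Mathlib

section
/- Let u₁, u₂, u₃ be linearly independent unit vectors in a real inner product space, set ρ_{ab} = ⟨u_a, u_b⟩ and define the partial correlations ρ_{ab|c} = (ρ_{ab} − ρ_{ac} ρ_{bc}) / ((1 − ρ_{ac}²)^{1/2} (1 − ρ_{bc}²)^{1/2}) for {a,b,c} = {1,2,3}. Then arccos ρ₁₂|₃ + arccos ρ₁₃|₂ + arccos ρ₂₃|₁ ≥ π. Consequently, the mixture proportion ω₀ = 1/2 − (1/(4π))[3π − arccos ρ₁₂|₃ − arccos ρ₁₃|₂ − arccos ρ₂₃|₁] is nonnegative. -/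
/-!
The partial correlation `ρ_{ab|c}` is the cosine of the angle at the vertex `u_c` of the spherical
triangle `u₁u₂u₃`: the angle between the components of `u_a` and `u_b` orthogonal to `u_c`.
With `α, β, γ` the angles at `u₃, u₂, u₁`, the polar law of cosines
`cos γ = sin α sin β ⟨u₂, u₃⟩ - cos α cos β` and `⟨u₂, u₃⟩ ≤ 1` give
`cos γ ≤ cos (π - α - β)`, so `α + β + γ ≥ π`: the angles of a spherical triangle sum to at
least `π`.
-/

open Real

noncomputable def partialCorr (r_ab r_ac r_bc : ℝ) : ℝ :=
  (r_ab - r_ac * r_bc) / (√(1 - r_ac ^ 2) * √(1 - r_bc ^ 2))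

/-- The determinant of the correlation matrix `!![1, a, b; a, 1, c; b, c, 1]`. -/
def correlationDet (a b c : ℝ) : ℝ := 1 + 2 * a * b * c - a ^ 2 - b ^ 2 - c ^ 2

lemma correlationDet_swap (a b c : ℝ) : correlationDet b a c = correlationDet a b c := by
  unfold correlationDet; ring

lemma LinearIndependent.pair_of_ne {R M ι : Type*} [Semiring R] [AddCommMonoid M] [Module R M]
    {v : ι → M} (h : LinearIndependent R v) {i j : ι} (hij : i ≠ j) :
    LinearIndependent R ![v i, v j] := by
  have hinj : Function.Injective ![i, j] := by
    intro k l hkl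
    fin_cases k <;> fin_cases l <;> simp_all [eq_comm]
  convert h.comp _ hinj using 1
  ext k
  fin_cases k <;> rfl

section PartialCorrelation

variable {a b c : ℝ}

lemma one_sub_partialCorr_sq (hb : b ^ 2 < 1) (hc : c ^ 2 < 1) :
    1 - partialCorr a b c ^ 2 = correlationDet a b c / ((1 - b ^ 2) * (1 - c ^ 2)) := by
  have hb' : 0 < 1 - b ^ 2 := by linarith
  have hc' : 0 < 1 - c ^ 2 := by linarith
  rw [partialCorr, correlationDet, div_pow, mul_pow, sq_sqrt hb'.le, sq_sqrt hc'.le]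
  field_simp
  ring

lemma abs_partialCorr_le_one (hb : b ^ 2 < 1) (hc : c ^ 2 < 1)
    (hD : 0 ≤ correlationDet a b c) : |partialCorr a b c| ≤ 1 := by
  have h := one_sub_partialCorr_sq (a := a) hb hc
  have : 0 ≤ correlationDet a b c / ((1 - b ^ 2) * (1 - c ^ 2)) :=
    div_nonneg hD (mul_nonneg (by linarith) (by linarith))
  exact (sq_le_one_iff_abs_le_one _).1 (by linarith)

lemma sin_arccos_partialCorr (hb : b ^ 2 < 1) (hc : c ^ 2 < 1)
    (hD : 0 ≤ correlationDet a b c) :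
    sin (arccos (partialCorr a b c)) =
      √(correlationDet a b c) / (√(1 - b ^ 2) * √(1 - c ^ 2)) := by
  rw [sin_arccos, one_sub_partialCorr_sq hb hc, sqrt_div hD, sqrt_mul (by linarith)]

lemma partialCorr_eq_sin_mul_sin_mul_sub (ha : a ^ 2 < 1) (hb : b ^ 2 < 1) (hc : c ^ 2 < 1)
    (hD : 0 ≤ correlationDet a b c) :
    partialCorr c a b = sin (arccos (partialCorr a b c)) * sin (arccos (partialCorr b a c)) * c
      - partialCorr a b c * partialCorr b a c := by
  rw [sin_arccos_partialCorr hb hc hD,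
    sin_arccos_partialCorr ha hc ((correlationDet_swap a b c).symm ▸ hD),
    correlationDet_swap a b c]
  have hsc := sq_sqrt (by linarith : 0 ≤ 1 - c ^ 2)
  have hsD := sq_sqrt hD
  have : 0 < √(1 - a ^ 2) := sqrt_pos.2 (by linarith)
  have : 0 < √(1 - b ^ 2) := sqrt_pos.2 (by linarith)
  have : 0 < √(1 - c ^ 2) := sqrt_pos.2 (by linarith)
  unfold partialCorr
  field_simp
  rw [hsc, hsD, correlationDet]
  ring

end PartialCorrelation

lemma pi_le_arccos_add_arccos_add_arccos {x y z : ℝ} (hx₁ : -1 ≤ x) (hx₂ : x ≤ 1)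
    (hy₁ : -1 ≤ y) (hy₂ : y ≤ 1)
    (h : z ≤ sin (arccos x) * sin (arccos y) - x * y) :
    π ≤ arccos x + arccos y + arccos z := by
  set θ := π - (arccos x + arccos y)
  rcases le_or_gt θ 0 with hθ | hθ
  · linarith [arccos_nonneg z]
  have hcos : cos θ = sin (arccos x) * sin (arccos y) - x * y := by
    rw [cos_pi_sub, cos_add, cos_arccos hx₁ hx₂, cos_arccos hy₁ hy₂]; ring
  have : θ ≤ arccos z := by
    calc θ = arccos (cos θ) :=
          (arccos_cos hθ.le (by linarith [arccos_nonneg x, arccos_nonneg y])).symm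
      _ ≤ arccos z := arccos_le_arccos (hcos ▸ h)
  linarith

lemma pi_le_sum_arccos_partialCorr {a b c : ℝ} (ha : a ^ 2 < 1) (hb : b ^ 2 < 1) (hc : c ^ 2 < 1)
    (hD : 0 ≤ correlationDet a b c) :
    π ≤ arccos (partialCorr a b c) + arccos (partialCorr b a c) +
      arccos (partialCorr c a b) := by
  obtain ⟨hx₁, hx₂⟩ := abs_le.1 (abs_partialCorr_le_one hb hc hD)
  obtain ⟨hy₁, hy₂⟩ :=
    abs_le.1 (abs_partialCorr_le_one ha hc ((correlationDet_swap a b c).symm ▸ hD))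
  refine pi_le_arccos_add_arccos_add_arccos hx₁ hx₂ hy₁ hy₂ ?_
  rw [partialCorr_eq_sin_mul_sin_mul_sub ha hb hc hD]
  have hsin : 0 ≤ sin (arccos (partialCorr a b c)) * sin (arccos (partialCorr b a c)) :=
    mul_nonneg (sin_nonneg_of_nonneg_of_le_pi (arccos_nonneg _) (arccos_le_pi _))
      (sin_nonneg_of_nonneg_of_le_pi (arccos_nonneg _) (arccos_le_pi _))
  have : c ≤ 1 := (abs_le.1 ((sq_le_one_iff_abs_le_one c).1 hc.le)).2
  nlinarith

section Geometry

variable {E : Type*} [NormedAddCommGroup E] [InnerProductSpace ℝ E]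

lemma inner_sq_lt_one_of_linearIndependent {x y : E} (hx : ‖x‖ = 1) (hy : ‖y‖ = 1)
    (h : LinearIndependent ℝ ![x, y]) : inner ℝ x y ^ 2 < 1 := by
  have hdet := (Matrix.posDef_gram_of_linearIndependent h).det_pos
  simp only [Matrix.det_fin_two, Matrix.gram_apply, Matrix.cons_val_zero, Matrix.cons_val_one,
    Matrix.cons_val_fin_one, real_inner_self_eq_norm_sq, hx, hy, real_inner_comm x y] at hdet
  linarith

lemma correlationDet_inner_nonneg {x y z : E} (hx : ‖x‖ = 1) (hy : ‖y‖ = 1)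
    (hz : ‖z‖ = 1) :
    0 ≤ correlationDet (inner ℝ x y) (inner ℝ x z) (inner ℝ y z) := by
  have hdet := (Matrix.posSemidef_gram ℝ ![x, y, z]).det_nonneg
  simp only [Matrix.det_fin_three, Matrix.gram_apply, Matrix.cons_val_zero, Matrix.cons_val_one,
    Matrix.cons_val, real_inner_self_eq_norm_sq, hx, hy, hz, real_inner_comm x y,
    real_inner_comm x z, real_inner_comm y z] at hdet
  unfold correlationDet
  linarith

end Geometry

/-- For linearly independent unit vectors u₁, u₂, u₃ in a real inner
product space, with ρ_{ab} = ⟨u_a, u_b⟩ and partial correlations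
ρ_{ab|c} = (ρ_{ab} − ρ_{ac} ρ_{bc}) / ((1 − ρ_{ac}²)^{1/2} (1 − ρ_{bc}²)^{1/2}),
one has arccos ρ₁₂|₃ + arccos ρ₁₃|₂ + arccos ρ₂₃|₁ ≥ π; consequently the mixture
proportion ω₀ = 1/2 − (1/(4π))[3π − arccos ρ₁₂|₃ − arccos ρ₁₃|₂ − arccos ρ₂₃|₁]
is nonnegative. -/
theorem partial_correlation_angle_sum_ge_pi_and_omega0_nonneg
    {E : Type*} [NormedAddCommGroup E] [InnerProductSpace ℝ E]
    (u₁ u₂ u₃ : E) (h₁ : ‖u₁‖ = 1) (h₂ : ‖u₂‖ = 1) (h₃ : ‖u₃‖ = 1)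
    (hind : LinearIndependent ℝ ![u₁, u₂, u₃])
    (ρ12 ρ13 ρ23 : ℝ)
    (hρ12 : ρ12 = inner ℝ u₁ u₂) (hρ13 : ρ13 = inner ℝ u₁ u₃) (hρ23 : ρ23 = inner ℝ u₂ u₃)
    (ρ12_3 ρ13_2 ρ23_1 : ℝ)
    (hp1 : ρ12_3 = (ρ12 - ρ13 * ρ23) / (Real.sqrt (1 - ρ13 ^ 2) * Real.sqrt (1 - ρ23 ^ 2)))
    (hp2 : ρ13_2 = (ρ13 - ρ12 * ρ23) / (Real.sqrt (1 - ρ12 ^ 2) * Real.sqrt (1 - ρ23 ^ 2)))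
    (hp3 : ρ23_1 = (ρ23 - ρ12 * ρ13) / (Real.sqrt (1 - ρ12 ^ 2) * Real.sqrt (1 - ρ13 ^ 2)))
    (ω0 : ℝ)
    (hω0 : ω0 = 1 / 2 - (1 / (4 * π)) *
      (3 * π - Real.arccos ρ12_3 - Real.arccos ρ13_2 - Real.arccos ρ23_1)) :
    π ≤ Real.arccos ρ12_3 + Real.arccos ρ13_2 + Real.arccos ρ23_1 ∧ 0 ≤ ω0 := by
  subst hρ12 hρ13 hρ23
  have hsum : π ≤ arccos ρ12_3 + arccos ρ13_2 + arccos ρ23_1 := by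
    rw [hp1, hp2, hp3]
    exact pi_le_sum_arccos_partialCorr
      (inner_sq_lt_one_of_linearIndependent h₁ h₂
        (hind.pair_of_ne (i := 0) (j := 1) (by decide)))
      (inner_sq_lt_one_of_linearIndependent h₁ h₃
        (hind.pair_of_ne (i := 0) (j := 2) (by decide)))
      (inner_sq_lt_one_of_linearIndependent h₂ h₃
        (hind.pair_of_ne (i := 1) (j := 2) (by decide)))
      (correlationDet_inner_nonneg h₁ h₂ h₃)
  refine ⟨hsum, ?_⟩
  rw [hω0, sub_nonneg, one_div_mul_eq_div, div_le_iff₀ (by positivity)]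
  linarith
end

section
/- Let Z₁ and Z₂ be independent standard normal random variables on a probability space, let ρ ∈ (−1,1), and set X = Z₁ and Y = ρ Z₁ + (1 − ρ²)^{1/2} Z₂. Then the bivariate quadrant probability equals P(X > 0 and Y > 0) = 1/4 + arcsin(ρ)/(2π). -/
open MeasureTheory ProbabilityTheory Real Set
open scoped ENNReal NNReal

/-!
In the coordinates `(Z₁, Z₂)`, whose joint law is the rotation-invariant standard Gaussian on
`ℝ²`, the event `{X > 0, Y > 0}` is the sector of angles `θ ∈ (-arcsin ρ, π/2)`, because
`ρ cos θ + √(1 - ρ²) sin θ = sin (θ + arcsin ρ)`. In polar coordinates a radial density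
integrates over a sector to a radial factor times the opening angle; the whole plane is the sector
of angle `2π` and has mass `1`, so the radial factor is `1/(2π)` and the quadrant has probability
`(π/2 + arcsin ρ)/(2π)`.
-/

theorem withDensity_radial_apply_of_polar_sector (f : ℝ → ℝ≥0∞) (hf : Measurable f)
    {S : Set (ℝ × ℝ)} (hS : MeasurableSet S) {a b : ℝ} (ha : -π ≤ a) (hb : b ≤ π)
    (hS_polar : ∀ p ∈ polarCoord.target, polarCoord.symm p ∈ S ↔ p.2 ∈ Ioo a b) :
    volume.withDensity (fun p : ℝ × ℝ => f (p.1 ^ 2 + p.2 ^ 2)) S =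
      (∫⁻ r in Ioi 0, ENNReal.ofReal r * f (r ^ 2)) * ENNReal.ofReal (b - a) := by
  have h_polar : ∀ p ∈ polarCoord.target,
      ENNReal.ofReal p.1 • S.indicator (fun p => f (p.1 ^ 2 + p.2 ^ 2)) (polarCoord.symm p) =
        ENNReal.ofReal p.1 * f (p.1 ^ 2) * (Ioo a b).indicator 1 p.2 := by
    intro p hp
    by_cases hθ : p.2 ∈ Ioo a b
    · rw [indicator_of_mem ((hS_polar p hp).2 hθ), indicator_of_mem hθ, polarCoord_symm_apply]
      simp [mul_pow, ← mul_add, cos_sq_add_sin_sq]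
    · rw [indicator_of_notMem (mt (hS_polar p hp).1 hθ), indicator_of_notMem hθ]
      simp
  calc volume.withDensity (fun p : ℝ × ℝ => f (p.1 ^ 2 + p.2 ^ 2)) S
      = ∫⁻ p, S.indicator (fun p => f (p.1 ^ 2 + p.2 ^ 2)) p := by
        rw [withDensity_apply _ hS, lintegral_indicator hS]
    _ = ∫⁻ p in Ioi 0 ×ˢ Ioo (-π) π,
          ENNReal.ofReal p.1 * f (p.1 ^ 2) * (Ioo a b).indicator 1 p.2 := by
        rw [← lintegral_comp_polarCoord_symm, ← polarCoord_target]
        exact setLIntegral_congr_fun polarCoord.open_target.measurableSet h_polar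
    _ = (∫⁻ r in Ioi 0, ENNReal.ofReal r * f (r ^ 2)) *
          ∫⁻ θ in Ioo (-π) π, (Ioo a b).indicator 1 θ := by
        rw [Measure.volume_eq_prod, ← Measure.prod_restrict]
        exact lintegral_prod_mul (f := fun r => ENNReal.ofReal r * f (r ^ 2))
          (g := (Ioo a b).indicator 1) (by fun_prop)
          (aemeasurable_one.indicator measurableSet_Ioo)
    _ = _ := by
        rw [lintegral_indicator_one measurableSet_Ioo, Measure.restrict_apply measurableSet_Ioo,
          inter_eq_left.2 (Ioo_subset_Ioo ha hb), volume_Ioo]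

theorem gaussianPDFReal_zero_mul_gaussianPDFReal_zero (v : ℝ≥0) (x y : ℝ) :
    gaussianPDFReal 0 v x * gaussianPDFReal 0 v y =
      (2 * π * v)⁻¹ * exp (-(x ^ 2 + y ^ 2) / (2 * v)) := by
  simp only [gaussianPDFReal, sub_zero]
  rw [mul_mul_mul_comm, ← exp_add, ← mul_inv, mul_self_sqrt (by positivity)]
  ring_nf

theorem gaussianReal_prod_eq_withDensity_radial (v : ℝ≥0) (hv : v ≠ 0) :
    (gaussianReal 0 v).prod (gaussianReal 0 v) =
      volume.withDensity fun p : ℝ × ℝ =>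
        ENNReal.ofReal ((2 * π * v)⁻¹ * exp (-(p.1 ^ 2 + p.2 ^ 2) / (2 * v))) := by
  rw [gaussianReal_of_var_ne_zero 0 hv,
    prod_withDensity (measurable_gaussianPDF 0 v) (measurable_gaussianPDF 0 v),
    ← Measure.volume_eq_prod]
  congr with p
  rw [gaussianPDF, gaussianPDF, ← ENNReal.ofReal_mul (gaussianPDFReal_nonneg 0 v _),
    gaussianPDFReal_zero_mul_gaussianPDFReal_zero]

theorem gaussianReal_prod_apply_of_polar_sector {v : ℝ≥0} (hv : v ≠ 0)
    {S : Set (ℝ × ℝ)} (hS : MeasurableSet S) {a b : ℝ} (ha : -π ≤ a) (hb : b ≤ π)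
    (hS_polar : ∀ p ∈ polarCoord.target, polarCoord.symm p ∈ S ↔ p.2 ∈ Ioo a b) :
    (gaussianReal 0 v).prod (gaussianReal 0 v) S = ENNReal.ofReal ((b - a) / (2 * π)) := by
  set f : ℝ → ℝ≥0∞ := fun t => ENNReal.ofReal ((2 * π * v)⁻¹ * exp (-t / (2 * v)))
  have hf : Measurable f := by fun_prop
  have hR : (∫⁻ r in Ioi 0, ENNReal.ofReal r * f (r ^ 2)) * ENNReal.ofReal (2 * π) = 1 := by
    have h := withDensity_radial_apply_of_polar_sector f hf MeasurableSet.univ le_rfl le_rfl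
      (fun p hp => by simpa [polarCoord_target] using hp.2)
    rw [← gaussianReal_prod_eq_withDensity_radial v hv, measure_univ, sub_neg_eq_add,
      ← two_mul] at h
    exact h.symm
  rw [gaussianReal_prod_eq_withDensity_radial v hv,
    withDensity_radial_apply_of_polar_sector f hf hS ha hb hS_polar,
    ENNReal.eq_inv_of_mul_eq_one_left hR, ← ENNReal.ofReal_inv_of_pos (by positivity),
    ← ENNReal.ofReal_mul (by positivity), div_eq_inv_mul]

theorem cos_pos_and_sin_add_pos_iff {α θ : ℝ} (hα : α ∈ Icc (-(π / 2)) (π / 2))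
    (hθ : θ ∈ Ioo (-π) π) :
    0 < cos θ ∧ 0 < sin (θ + α) ↔ θ ∈ Ioo (-α) (π / 2) := by
  obtain ⟨hα₁, hα₂⟩ := hα
  obtain ⟨hθ₁, hθ₂⟩ := hθ
  constructor
  · rintro ⟨hcos, hsin⟩
    have hθ_abs : |θ| < π / 2 := by
      by_contra! h
      rw [← cos_abs] at hcos
      linarith [cos_nonpos_of_pi_div_two_le_of_le h (by linarith [abs_lt.2 ⟨hθ₁, hθ₂⟩])]
    obtain ⟨hθ_gt, hθ_lt⟩ := abs_lt.1 hθ_abs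
    refine ⟨?_, hθ_lt⟩
    by_contra! h
    linarith [sin_nonpos_of_nonpos_of_neg_pi_le (x := θ + α) (by linarith) (by linarith)]
  · rintro ⟨h₁, h₂⟩
    exact ⟨cos_pos_of_mem_Ioo ⟨by linarith, h₂⟩,
      sin_pos_of_pos_of_lt_pi (by linarith) (by linarith)⟩

def correlatedQuadrant (ρ : ℝ) : Set (ℝ × ℝ) :=
  {p | 0 < p.1 ∧ 0 < ρ * p.1 + √(1 - ρ ^ 2) * p.2}

theorem measurableSet_correlatedQuadrant (ρ : ℝ) : MeasurableSet (correlatedQuadrant ρ) :=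
  (measurableSet_lt measurable_const measurable_fst).inter
    (measurableSet_lt measurable_const
      ((measurable_fst.const_mul ρ).add (measurable_snd.const_mul _)))

theorem polarCoord_symm_mem_correlatedQuadrant_iff {ρ : ℝ} (hρ : ρ ∈ Icc (-1) 1)
    {p : ℝ × ℝ} (hp : p ∈ polarCoord.target) :
    polarCoord.symm p ∈ correlatedQuadrant ρ ↔ p.2 ∈ Ioo (-arcsin ρ) (π / 2) := by
  obtain ⟨hr, hθ⟩ := hp
  have h_rot : ρ * (p.1 * cos p.2) + √(1 - ρ ^ 2) * (p.1 * sin p.2) =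
      p.1 * sin (p.2 + arcsin ρ) := by
    rw [sin_add, sin_arcsin hρ.1 hρ.2, cos_arcsin]
    ring
  rw [← cos_pos_and_sin_add_pos_iff
    ⟨neg_pi_div_two_le_arcsin ρ, arcsin_le_pi_div_two ρ⟩ hθ]
  simp only [correlatedQuadrant, polarCoord_symm_apply, mem_ofPred_eq, h_rot,
    mul_pos_iff_of_pos_left (show 0 < p.1 from hr)]

/-- For independent standard normal Z₁, Z₂ and ρ ∈ (−1,1), setting
X = Z₁ and Y = ρ Z₁ + (1 − ρ²)^{1/2} Z₂, the bivariate quadrant probability equals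
P(X > 0 and Y > 0) = 1/4 + arcsin(ρ)/(2π). -/
theorem bivariate_normal_quadrant_probability
    {Ω : Type*} [MeasureSpace Ω] [IsProbabilityMeasure (ℙ : Measure Ω)]
    (Z₁ Z₂ : Ω → ℝ)
    (hZ₁ : Measure.map Z₁ ℙ = gaussianReal 0 1)
    (hZ₂ : Measure.map Z₂ ℙ = gaussianReal 0 1)
    (hindep : IndepFun Z₁ Z₂ ℙ)
    (ρ : ℝ) (hρ : ρ ∈ Set.Ioo (-1 : ℝ) 1)
    (X Y : Ω → ℝ)
    (hX : X = Z₁)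
    (hY : Y = fun ω => ρ * Z₁ ω + Real.sqrt (1 - ρ ^ 2) * Z₂ ω) :
    ℙ {ω | 0 < X ω ∧ 0 < Y ω} =
      ENNReal.ofReal (1 / 4 + Real.arcsin ρ / (2 * π)) := by
  have hZ₁m : AEMeasurable Z₁ ℙ := .of_map_ne_zero (by simp [hZ₁, NeZero.ne])
  have hZ₂m : AEMeasurable Z₂ ℙ := .of_map_ne_zero (by simp [hZ₂, NeZero.ne])
  have h_law : Measure.map (fun ω => (Z₁ ω, Z₂ ω)) ℙ =
      (gaussianReal 0 1).prod (gaussianReal 0 1) := by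
    rw [(indepFun_iff_map_prod_eq_prod_map_map hZ₁m hZ₂m).1 hindep, hZ₁, hZ₂]
  have h_event : {ω | 0 < X ω ∧ 0 < Y ω} =
      (fun ω => (Z₁ ω, Z₂ ω)) ⁻¹' correlatedQuadrant ρ := by
    subst hX hY
    rfl
  rw [h_event, ← Measure.map_apply_of_aemeasurable (hZ₁m.prodMk hZ₂m)
      (measurableSet_correlatedQuadrant ρ), h_law,
    gaussianReal_prod_apply_of_polar_sector one_ne_zero (measurableSet_correlatedQuadrant ρ)
      (by linarith [arcsin_le_pi_div_two ρ, pi_pos]) (by linarith [pi_pos])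
      (fun p hp => polarCoord_symm_mem_correlatedQuadrant_iff (Ioo_subset_Icc_self hρ) hp)]
  congr 1
  field_simp
  ring
end
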